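/- Let S be uniform on GF(q)^M (M source packets) and let an eavesdropper observe Y = G·S for a Γ×M matrix G over GF(q) with Γ < M such that no row span vector of GF(q)^M of the form a standard basis vector e_i lies in the row space of G. Then for each coordinate s_i of S, H(s_i | Y) = H(s_i) = 1 (base-q), i.e., the code is weakly secure. -/

import Mathlib

open Finset

/-- Probability that the random variable `X` on the finite weighted space `(Ω, μ)`
takes the value `a`. -/
noncomputable def pr {Ω α : Type*} [Fintype Ω] [DecidableEq α]
    (μ : Ω → ℝ) (X : Ω → α) (a : α) : ℝ :=
  ∑ ω ∈ Finset.univ.filter (fun ω => X ω = a), μ ω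

/-- Base-`q` Shannon entropy of the random variable `X`. -/
noncomputable def ent {Ω α : Type*} [Fintype Ω] [Fintype α] [DecidableEq α]
    (q : ℝ) (μ : Ω → ℝ) (X : Ω → α) : ℝ :=
  -∑ a, pr μ X a * Real.logb q (pr μ X a)

/-- Conditional entropy `H(X | Y) = H(X, Y) - H(Y)` (base `q`). -/
noncomputable def condEnt {Ω α β : Type*} [Fintype Ω] [Fintype α] [Fintype β]
    [DecidableEq α] [DecidableEq β] (q : ℝ) (μ : Ω → ℝ) (X : Ω → α) (Y : Ω → β) : ℝ :=
  ent q μ (fun ω => (X ω, Y ω)) - ent q μ Y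

/-- Mutual information `I(X ; Y) = H(X) - H(X | Y)` (base `q`). -/
noncomputable def mutInfo {Ω α β : Type*} [Fintype Ω] [Fintype α] [Fintype β]
    [DecidableEq α] [DecidableEq β] (q : ℝ) (μ : Ω → ℝ) (X : Ω → α) (Y : Ω → β) : ℝ :=
  ent q μ X - condEnt q μ X Y

/-!
The image of a uniform vector under an additive map is uniform on that image, so each entropy
in the statement is `log_q` of the size of an image. Since `e_i` is not in the row space of `G`,
some `k ∈ ker G` has `k_i ≠ 0`; adding multiples of `k` moves `s_i` to any value without changing
`Y`, so `(s_i, Y)` ranges over all of `GF(q) × im G` and `H(s_i, Y) = 1 + H(Y)`.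
-/

open Matrix

section Entropy

variable {Ω α β : Type*} [Fintype Ω]

lemma pr_comp [Fintype α] [DecidableEq α] [DecidableEq β] (μ : Ω → ℝ) (X : Ω → α) (f : α → β)
    (b : β) :
    pr μ (fun ω => f (X ω)) b = ∑ a with f a = b, pr μ X a := by
  rw [pr, ← Finset.sum_fiberwise_of_maps_to (g := X) (t := {a | f a = b}) (by simp)]
  refine Finset.sum_congr rfl fun a ha => ?_
  rw [Finset.filter_filter, pr]
  congr 1
  ext ω
  grind

lemma ent_eq_logb_card_of_pr_eq [Fintype α] [DecidableEq α] (q : ℝ) (μ : Ω → ℝ) (X : Ω → α)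
    (T : Finset α) (hX : ∀ a, pr μ X a = if a ∈ T then (#T : ℝ)⁻¹ else 0) :
    ent q μ X = Real.logb q #T := by
  have hterm : ∀ a, pr μ X a * Real.logb q (pr μ X a)
      = if a ∈ T then -((#T : ℝ)⁻¹ * Real.logb q #T) else 0 := by
    intro a
    rw [hX]
    split_ifs <;> simp [Real.logb_inv]
  rcases T.eq_empty_or_nonempty with rfl | hT
  · simp [ent, hterm]
  have hT' : (#T : ℝ) ≠ 0 := by exact_mod_cast hT.card_pos.ne'
  simp only [ent, hterm, Finset.sum_ite_mem, Finset.univ_inter, Finset.sum_const, nsmul_eq_mul]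
  field_simp

end Entropy

section UniformImage

variable {Ω V W : Type*} [Fintype Ω] [AddGroup V] [Fintype V] [AddGroup W] [DecidableEq W]

lemma card_eq_card_image_mul_card_ker (f : V →+ W) :
    Fintype.card V = #(univ.image f) * #{v | f v = 0} := by
  rw [← Finset.card_univ, Finset.card_eq_sum_card_image f univ]
  refine Finset.sum_const_nat fun b hb => ?_
  obtain ⟨v, -, rfl⟩ := Finset.mem_image.mp hb
  exact AddMonoidHom.card_fiber_eq_of_mem_range f ⟨v, rfl⟩ ⟨0, map_zero f⟩

variable [DecidableEq V]

lemma pr_map_of_uniform (μ : Ω → ℝ) (S : Ω → V)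
    (hS : ∀ v, pr μ S v = (Fintype.card V : ℝ)⁻¹) (f : V →+ W) (w : W) :
    pr μ (fun ω => f (S ω)) w = if w ∈ univ.image f then (#(univ.image f) : ℝ)⁻¹ else 0 := by
  rw [pr_comp, Finset.sum_congr rfl fun v _ => hS v, Finset.sum_const, nsmul_eq_mul]
  split_ifs with hw
  · obtain ⟨v, -, rfl⟩ := Finset.mem_image.mp hw
    have hker : (#{v | f v = 0} : ℝ) ≠ 0 := by
      exact_mod_cast (Finset.card_pos.mpr ⟨0, by simp⟩).ne'
    rw [card_eq_card_image_mul_card_ker f,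
      AddMonoidHom.card_fiber_eq_of_mem_range f ⟨v, rfl⟩ ⟨0, map_zero f⟩]
    push_cast
    field_simp
  · have hfiber : ∀ v ∈ univ, ¬f v = w := fun v _ hv => hw (hv ▸ mem_image_of_mem f (mem_univ v))
    simp [filter_false_of_mem hfiber]

lemma ent_map_of_uniform [Fintype W] (q : ℝ) (μ : Ω → ℝ) (S : Ω → V)
    (hS : ∀ v, pr μ S v = (Fintype.card V : ℝ)⁻¹) (f : V →+ W) :
    ent q μ (fun ω => f (S ω)) = Real.logb q #(univ.image f) :=
  ent_eq_logb_card_of_pr_eq q μ _ _ (pr_map_of_uniform μ S hS f)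

end UniformImage

lemma Matrix.exists_mulVec_eq_zero_of_single_notMem_span_rows {F : Type*} [Field F] {m n : ℕ}
    (G : Matrix (Fin m) (Fin n) F) (i : Fin n)
    (hi : Pi.single i (1 : F) ∉ Submodule.span F (Set.range fun j => G j)) :
    ∃ k : Fin n → F, G *ᵥ k = 0 ∧ k i ≠ 0 := by
  obtain ⟨φ, hφi, hφG⟩ := Submodule.exists_dual_map_eq_bot_of_notMem hi inferInstance
  set k : Fin n → F := fun m => φ (Pi.single m 1)
  have hφ : ∀ v, φ v = v ⬝ᵥ k := fun v => by
    conv_lhs => rw [pi_eq_sum_univ' v]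
    simp [map_sum, dotProduct, k]
  refine ⟨k, funext fun j => ?_, hφi⟩
  show G j ⬝ᵥ k = 0
  rw [← hφ]
  have hmem : φ (G j) ∈ (Submodule.span F (Set.range fun j => G j)).map φ :=
    Submodule.mem_map_of_mem (Submodule.subset_span ⟨j, rfl⟩)
  rwa [hφG, Submodule.mem_bot] at hmem

lemma AddMonoidHom.image_prod_eq_univ_prod_image {V A B : Type*} [AddGroup V] [Fintype V]
    [AddGroup A] [Fintype A] [DecidableEq A] [AddGroup B] [DecidableEq B]
    (f : V →+ A) (g : V →+ B) (hf : ∀ a, ∃ k, g k = 0 ∧ f k = a) :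
    univ.image (f.prod g) = univ ×ˢ univ.image g := by
  ext ⟨a, b⟩
  simp only [Finset.mem_image, Finset.mem_product, Finset.mem_univ, true_and]
  constructor
  · rintro ⟨v, hv⟩
    exact ⟨v, congrArg Prod.snd hv⟩
  · rintro ⟨v, rfl⟩
    obtain ⟨k, hgk, hfk⟩ := hf (-f v + a)
    exact ⟨v + k, by simp [hgk, hfk]⟩

theorem stmt9_general {Ω F : Type*} [Fintype Ω] [Field F] [Fintype F] [DecidableEq F]
    (M Γ : ℕ)
    (μ : Ω → ℝ)
    (S : Ω → (Fin M → F))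
    (hS : ∀ v, pr μ S v = 1 / (Fintype.card F : ℝ) ^ M)
    (G : Matrix (Fin Γ) (Fin M) F)
    (hrow : ∀ i : Fin M,
      Pi.single i (1 : F) ∉ Submodule.span F (Set.range (fun j : Fin Γ => G j))) :
    ∀ i : Fin M,
      condEnt (Fintype.card F : ℝ) μ (fun ω => S ω i) (fun ω => G.mulVec (S ω))
          = ent (Fintype.card F : ℝ) μ (fun ω => S ω i)
      ∧ ent (Fintype.card F : ℝ) μ (fun ω => S ω i) = 1 := by
  intro i
  have hS' : ∀ v, pr μ S v = (Fintype.card (Fin M → F) : ℝ)⁻¹ := by simp [hS]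
  have hq : (1 : ℝ) < Fintype.card F := by exact_mod_cast Fintype.one_lt_card
  set q : ℝ := (Fintype.card F : ℝ)
  let si : (Fin M → F) →+ F := Pi.evalAddMonoidHom (fun _ => F) i
  let Y : (Fin M → F) →+ (Fin Γ → F) := G.mulVecLin.toAddMonoidHom
  obtain ⟨k, hGk, hki⟩ := G.exists_mulVec_eq_zero_of_single_notMem_span_rows i (hrow i)
  have hsi_ker : ∀ a, ∃ v, Y v = 0 ∧ si v = a := fun a =>
    ⟨(a * (k i)⁻¹) • k, by simp [Y, si, hGk, hki]⟩
  have hn : (#(univ.image Y) : ℝ) ≠ 0 := by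
    exact_mod_cast (Finset.univ_nonempty.image Y).card_pos.ne'
  have hent_si : ent q μ (fun ω => S ω i) = 1 := by
    refine (ent_map_of_uniform q μ S hS' si).trans ?_
    rw [image_univ_of_surjective fun a => (hsi_ker a).imp fun _ => And.right, card_univ]
    exact Real.logb_self_eq_one hq
  have hent_Y : ent q μ (fun ω => G *ᵥ S ω) = Real.logb q #(univ.image Y) :=
    ent_map_of_uniform q μ S hS' Y
  have hent_pair :
      ent q μ (fun ω => (S ω i, G *ᵥ S ω)) = 1 + Real.logb q #(univ.image Y) := by
    refine (ent_map_of_uniform q μ S hS' (si.prod Y)).trans ?_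
    rw [si.image_prod_eq_univ_prod_image Y hsi_ker, Finset.card_product, Finset.card_univ]
    push_cast
    rw [Real.logb_mul (by positivity) hn, Real.logb_self_eq_one hq]
  refine ⟨?_, hent_si⟩
  rw [condEnt, hent_pair, hent_Y, hent_si]
  ring

/-- Weak security of linear observations: if no standard basis vector lies in the
row space of `G`, then `H(s_i | Y) = H(s_i) = 1` for every coordinate. -/
theorem stmt9 {Ω F : Type*} [Fintype Ω] [Field F] [Fintype F] [DecidableEq F]
    (M Γ : ℕ) (hΓM : Γ < M)
    (μ : Ω → ℝ) (hμ0 : ∀ ω, 0 ≤ μ ω) (hμ1 : ∑ ω, μ ω = 1)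
    (S : Ω → (Fin M → F))
    (hS : ∀ v, pr μ S v = 1 / (Fintype.card F : ℝ) ^ M)
    (G : Matrix (Fin Γ) (Fin M) F)
    (hrow : ∀ i : Fin M,
      Pi.single i (1 : F) ∉ Submodule.span F (Set.range (fun j : Fin Γ => G j))) :
    ∀ i : Fin M,
      condEnt (Fintype.card F : ℝ) μ (fun ω => S ω i) (fun ω => G.mulVec (S ω))
          = ent (Fintype.card F : ℝ) μ (fun ω => S ω i)
      ∧ ent (Fintype.card F : ℝ) μ (fun ω => S ω i) = 1 :=
  stmt9_general M Γ μ S hS G hrow
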